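/- (Theorem 3.5(i)) Let the sequences (xᵏ, yᵏ, uᵏ, θ_k) be generated by the FPSA iteration, and let m, M > 0 satisfy m ≤ f(Kxᵏ) ≤ M for all k. Define the merit function ϖ(x,y,u) = φ(x,u)/(⟨Kx, y⟩ − f*(y)) on the set where ⟨Kx,y⟩ − f*(y) > m/2. Then there exist c > 0 and an index K̂ such that for all k ≥ K̂, ϖ(xᵏ⁺¹, yᵏ⁺¹, uᵏ⁺¹) ≤ ϖ(xᵏ, yᵏ, uᵏ) − c‖xᵏ − xᵏ⁺¹‖² − c‖uᵏ − uᵏ⁺¹‖². -/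

import Mathlib

open Filter Metric Set RealInnerProductSpace
open scoped Topology Classical

noncomputable section

/-- Convexity for extended-real-valued functions. -/
def ERealConvex {α : Type*} [AddCommGroup α] [Module ℝ α] (f : α → EReal) : Prop :=
  ∀ x y : α, ∀ a b : ℝ, 0 ≤ a → 0 ≤ b → a + b = 1 →
    f (a • x + b • y) ≤ (a : EReal) * f x + (b : EReal) * f y

/-- A proper extended-real-valued function: never `⊥` and finite somewhere. -/
def ERealProper {α : Type*} (f : α → EReal) : Prop :=
  (∀ x, f x ≠ ⊥) ∧ ∃ x, f x ≠ ⊤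

/-- Effective domain of an extended-real-valued function. -/
def edom {α : Type*} (f : α → EReal) : Set α := {x | f x ≠ ⊤}

/-- Convex (Fenchel) conjugate. -/
def econj {α : Type*} [NormedAddCommGroup α] [InnerProductSpace ℝ α]
    (f : α → EReal) (y : α) : EReal :=
  ⨆ z, (((⟪z, y⟫ : ℝ) : EReal) - f z)

/-- Convex subdifferential. -/
def csubdiff {α : Type*} [NormedAddCommGroup α] [InnerProductSpace ℝ α]
    (f : α → EReal) (z : α) : Set α :=
  {v | ∀ w, f z + ((⟪v, w - z⟫ : ℝ) : EReal) ≤ f w}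

/-- Normal cone of a convex set. -/
def normalCone {α : Type*} [NormedAddCommGroup α] [InnerProductSpace ℝ α]
    (S : Set α) (x : α) : Set α :=
  {v | ∀ z ∈ S, ⟪v, z - x⟫ ≤ 0}

/-- Calmness of an extended-real-valued function at a point of its domain. -/
def ECalm {α : Type*} [NormedAddCommGroup α] (f : α → EReal) (y : α) : Prop :=
  f y ≠ ⊤ ∧ ∃ ϱ > (0:ℝ), ∃ ε > (0:ℝ), ∀ y' ∈ Metric.ball y ε,
    f y - ((ϱ * ‖y' - y‖ : ℝ) : EReal) ≤ f y' ∧ f y' ≤ f y + ((ϱ * ‖y' - y‖ : ℝ) : EReal)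

/-- Fréchet subdifferential of an extended-real-valued function of one variable. -/
def fsub {α : Type*} [NormedAddCommGroup α] [InnerProductSpace ℝ α]
    (f : α → EReal) (x : α) : Set α :=
  {v | 0 ≤ Filter.liminf
      (fun z => (f z - f x - ((⟪v, z - x⟫ : ℝ) : EReal)) * (((‖z - x‖)⁻¹ : ℝ) : EReal))
      (𝓝[≠] x)}

/-- Fréchet subdifferential of a function of two (inner-product-space) variables. -/
def fsub2 {α β : Type*} [NormedAddCommGroup α] [InnerProductSpace ℝ α]
    [NormedAddCommGroup β] [InnerProductSpace ℝ β]
    (Φ : α → β → EReal) (a : α) (b : β) : Set (α × β) :=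
  {v | 0 ≤ Filter.liminf
      (fun w : α × β =>
        (Φ w.1 w.2 - Φ a b - ((⟪v.1, w.1 - a⟫ + ⟪v.2, w.2 - b⟫ : ℝ) : EReal)) *
          (((‖w - (a, b)‖)⁻¹ : ℝ) : EReal))
      (𝓝[≠] (a, b))}

/-- Limiting (Mordukhovich) subdifferential of a function of two variables. -/
def lsub2 {α β : Type*} [NormedAddCommGroup α] [InnerProductSpace ℝ α]
    [NormedAddCommGroup β] [InnerProductSpace ℝ β]
    (Φ : α → β → EReal) (a : α) (b : β) : Set (α × β) :=
  {v | ∃ w : ℕ → α × β, ∃ vs : ℕ → α × β,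
      Tendsto w atTop (𝓝 (a, b)) ∧
      Tendsto (fun k => Φ (w k).1 (w k).2) atTop (𝓝 (Φ a b)) ∧
      (∀ k, vs k ∈ fsub2 Φ (w k).1 (w k).2) ∧
      Tendsto vs atTop (𝓝 v)}

/-- Fréchet subdifferential of a function of three variables. -/
def fsub3 {α β γ : Type*} [NormedAddCommGroup α] [InnerProductSpace ℝ α]
    [NormedAddCommGroup β] [InnerProductSpace ℝ β]
    [NormedAddCommGroup γ] [InnerProductSpace ℝ γ]
    (Φ : α → β → γ → EReal) (a : α) (b : β) (c : γ) : Set (α × β × γ) :=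
  {v | 0 ≤ Filter.liminf
      (fun w : α × β × γ =>
        (Φ w.1 w.2.1 w.2.2 - Φ a b c -
          ((⟪v.1, w.1 - a⟫ + ⟪v.2.1, w.2.1 - b⟫ + ⟪v.2.2, w.2.2 - c⟫ : ℝ) : EReal)) *
          (((‖w - (a, b, c)‖)⁻¹ : ℝ) : EReal))
      (𝓝[≠] (a, b, c))}

/-- Limiting (Mordukhovich) subdifferential of a function of three variables. -/
def lsub3 {α β γ : Type*} [NormedAddCommGroup α] [InnerProductSpace ℝ α]
    [NormedAddCommGroup β] [InnerProductSpace ℝ β]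
    [NormedAddCommGroup γ] [InnerProductSpace ℝ γ]
    (Φ : α → β → γ → EReal) (a : α) (b : β) (c : γ) : Set (α × β × γ) :=
  {v | ∃ w : ℕ → α × β × γ, ∃ vs : ℕ → α × β × γ,
      Tendsto w atTop (𝓝 (a, b, c)) ∧
      Tendsto (fun k => Φ (w k).1 (w k).2.1 (w k).2.2) atTop (𝓝 (Φ a b c)) ∧
      (∀ k, vs k ∈ fsub3 Φ (w k).1 (w k).2.1 (w k).2.2) ∧
      Tendsto vs atTop (𝓝 v)}

/-- A polyhedral set: a finite intersection of closed half-spaces. -/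
def IsPolyhedral {α : Type*} [NormedAddCommGroup α] [InnerProductSpace ℝ α]
    (S : Set α) : Prop :=
  ∃ (m : ℕ) (a : Fin m → α) (b : Fin m → ℝ), S = {z | ∀ i, ⟪a i, z⟫ ≤ b i}

/-- The merit function φ(x,u) = g(x) + h(x) + ι_S(x) + (1/(2δ))‖x-u‖². -/
def phiF {n : ℕ} (S : Set (EuclideanSpace ℝ (Fin n)))
    (g : EuclideanSpace ℝ (Fin n) → EReal) (h : EuclideanSpace ℝ (Fin n) → ℝ) (δ : ℝ)
    (x u : EuclideanSpace ℝ (Fin n)) : EReal :=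
  g x + ((h x : ℝ) : EReal) + (if x ∈ S then (0 : EReal) else ⊤)
    + (((2 * δ)⁻¹ * ‖x - u‖ ^ 2 : ℝ) : EReal)

/-- ϑ(x,u) = φ(x,u)/f(Kx). -/
def varthetaF {n p : ℕ} (S : Set (EuclideanSpace ℝ (Fin n)))
    (g : EuclideanSpace ℝ (Fin n) → EReal) (h : EuclideanSpace ℝ (Fin n) → ℝ)
    (f : EuclideanSpace ℝ (Fin p) → EReal)
    (K : EuclideanSpace ℝ (Fin n) →ₗ[ℝ] EuclideanSpace ℝ (Fin p)) (δ : ℝ)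
    (x u : EuclideanSpace ℝ (Fin n)) : EReal :=
  phiF S g h δ x u / f (K x)

/-- ϖ(x,y,u) = φ(x,u)/(⟨Kx,y⟩ - f*(y)). -/
def varpiF {n p : ℕ} (S : Set (EuclideanSpace ℝ (Fin n)))
    (g : EuclideanSpace ℝ (Fin n) → EReal) (h : EuclideanSpace ℝ (Fin n) → ℝ)
    (f : EuclideanSpace ℝ (Fin p) → EReal)
    (K : EuclideanSpace ℝ (Fin n) →ₗ[ℝ] EuclideanSpace ℝ (Fin p)) (δ : ℝ)
    (x : EuclideanSpace ℝ (Fin n)) (y : EuclideanSpace ℝ (Fin p))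
    (u : EuclideanSpace ℝ (Fin n)) : EReal :=
  phiF S g h δ x u / (((⟪K x, y⟫ : ℝ) : EReal) - econj f y)

/-!
Write `F k = f (K xᵏ)`, `P k = φ(xᵏ, uᵏ)` (so `θ k = P k / F k`) and
`s k = α ‖xᵏ - xᵏ⁺¹‖² + β ‖uᵏ - uᵏ⁺¹‖²` with `α = 1/(2δ) - L/2`, `β = (2 - σ)/(2δσ)`.
Strong convexity of the proximal subproblem, the descent lemma for `h` and the relaxation step
for `u` give `P (k+1) + s k ≤ θ k * D k` with `D k = F k + ⟪yᵏ⁺¹, K xᵏ⁺¹ - K xᵏ⟫`.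
By the Fenchel–Young equality for `yᵏ⁺¹ ∈ ∂f(K xᵏ)`, `D k` is the denominator of
`ϖ(xᵏ⁺¹, yᵏ⁺¹, uᵏ⁺¹)`, and by the subgradient inequality `D k ≤ F (k+1)`. Hence
`s k ≤ M (θ k - θ (k+1))`, so `s k → 0`; the subgradients are bounded on the compact set `K(S)`,
so `D k - F k → 0` and `D` is eventually positive. Dividing the decrease by `D (k+1) ≤ M` then
gives the claim with `c = min α β / M`.
-/

section ConvexAnalysis

variable {E : Type*} [NormedAddCommGroup E] [InnerProductSpace ℝ E]

lemma norm_smul_add_smul_sub_sq (t : ℝ) (a b v : E) :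
    ‖((1 - t) • a + t • b) - v‖ ^ 2
      = (1 - t) * ‖a - v‖ ^ 2 + t * ‖b - v‖ ^ 2 - t * (1 - t) * ‖a - b‖ ^ 2 := by
  rw [show ((1 - t) • a + t • b) - v = (1 - t) • (a - v) + t • (b - v) by module,
    show a - b = (a - v) - (b - v) by abel, norm_add_sq_real, norm_sub_sq_real (a - v),
    norm_smul, norm_smul, real_inner_smul_left, real_inner_smul_right, Real.norm_eq_abs,
    Real.norm_eq_abs, mul_pow, mul_pow, sq_abs, sq_abs]
  ring

lemma ERealConvex.toReal_add_sq_le_of_isMinOn {g : E → EReal} (hgconv : ERealConvex g)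
    (hgbot : ∀ z, g z ≠ ⊥) {S : Set E} (hS : Convex ℝ S) {c : ℝ} {v xs x : E}
    (hxs : xs ∈ S) (hx : x ∈ S) (hgxs : g xs ≠ ⊤) (hgx : g x ≠ ⊤)
    (hmin : IsMinOn (fun w => g w + ((c * ‖w - v‖ ^ 2 : ℝ) : EReal)) S xs) :
    (g xs).toReal + c * ‖xs - v‖ ^ 2 + c * ‖xs - x‖ ^ 2 ≤ (g x).toReal + c * ‖x - v‖ ^ 2 := by
  have hsegment : ∀ t ∈ Ioo (0 : ℝ) 1,
      (g xs).toReal + c * ‖xs - v‖ ^ 2 + c * (1 - t) * ‖xs - x‖ ^ 2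
        ≤ (g x).toReal + c * ‖x - v‖ ^ 2 := by
    intro t ⟨ht0, ht1⟩
    have hconv := hgconv xs x (1 - t) t (by linarith) ht0.le (by ring)
    have hmin_t := (isMinOn_iff.1 hmin _ (hS hxs hx (by linarith) ht0.le (by ring))).trans
      (add_le_add hconv le_rfl)
    rw [← EReal.coe_toReal hgxs (hgbot xs), ← EReal.coe_toReal hgx (hgbot x)] at hmin_t
    norm_cast at hmin_t
    rw [norm_smul_add_smul_sub_sq] at hmin_t
    nlinarith
  have hlim : Tendsto (fun t : ℝ => (g xs).toReal + c * ‖xs - v‖ ^ 2 + c * (1 - t) * ‖xs - x‖ ^ 2)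
      (𝓝[>] 0) (𝓝 ((g xs).toReal + c * ‖xs - v‖ ^ 2 + c * (1 - 0) * ‖xs - x‖ ^ 2)) :=
    ((Continuous.tendsto (by fun_prop) 0).mono_left nhdsWithin_le_nhds)
  rw [sub_zero, mul_one] at hlim
  exact le_of_tendsto hlim (mem_of_superset (Ioo_mem_nhdsGT zero_lt_one) hsegment)

lemma le_add_inner_add_of_lipschitz_gradient [CompleteSpace E] {h : E → ℝ} {gh : E → E}
    {O : Set E} {L : ℝ} (hgrad : ∀ z ∈ O, HasGradientAt h (gh z) z)
    (hlip : ∀ z ∈ O, ∀ w ∈ O, ‖gh z - gh w‖ ≤ L * ‖z - w‖) {a b : E}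
    (hseg : segment ℝ a b ⊆ O) :
    h b ≤ h a + ⟪gh a, b - a⟫ + L / 2 * ‖b - a‖ ^ 2 := by
  set γ : ℝ → E := fun t => a + t • (b - a)
  have hγO : ∀ t ∈ Icc (0 : ℝ) 1, γ t ∈ O := fun t ht =>
    hseg (segment_eq_image' ℝ a b ▸ mem_image_of_mem _ ht)
  set φ : ℝ → ℝ := fun t => h (γ t) - t * ⟪gh a, b - a⟫ - L / 2 * ‖b - a‖ ^ 2 * t ^ 2
  have hφ' : ∀ t ∈ Icc (0 : ℝ) 1, HasDerivAt φ
      (⟪gh (γ t) - gh a, b - a⟫ - L * ‖b - a‖ ^ 2 * t) t := by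
    intro t ht
    have hγ' : HasDerivAt γ (b - a) t :=
      (((hasDerivAt_id t).smul_const (b - a)).const_add a).congr_deriv (one_smul _ _)
    have := (((hgrad _ (hγO t ht)).hasFDerivAt.comp_hasDerivAt t hγ').sub
      ((hasDerivAt_id t).mul_const ⟪gh a, b - a⟫)).sub
      (((hasDerivAt_id t).pow 2).const_mul (L / 2 * ‖b - a‖ ^ 2))
    refine this.congr_deriv ?_
    simp only [InnerProductSpace.toDual_apply_apply, inner_sub_left, id]
    ring
  have hφ'_nonpos : ∀ t ∈ Icc (0 : ℝ) 1, ⟪gh (γ t) - gh a, b - a⟫ - L * ‖b - a‖ ^ 2 * t ≤ 0 := by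
    intro t ht
    have hlip_t : ‖gh (γ t) - gh a‖ ≤ L * (t * ‖b - a‖) := by
      simpa [γ, norm_smul, abs_of_nonneg ht.1] using
        hlip _ (hγO t ht) a (hseg (left_mem_segment ℝ a b))
    nlinarith [real_inner_le_norm (gh (γ t) - gh a) (b - a), norm_nonneg (b - a),
      mul_le_mul_of_nonneg_right hlip_t (norm_nonneg (b - a))]
  have hanti : AntitoneOn φ (Icc 0 1) :=
    antitoneOn_of_hasDerivWithinAt_nonpos (convex_Icc 0 1)
      (fun t ht => (hφ' t ht).continuousAt.continuousWithinAt)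
      (fun t ht => (hφ' t (interior_subset ht)).hasDerivWithinAt)
      (fun t ht => hφ'_nonpos t (interior_subset ht))
  have hφ0 : φ 0 = h a := by simp [φ, γ]
  have hφ1 : φ 1 = h b - ⟪gh a, b - a⟫ - L / 2 * ‖b - a‖ ^ 2 := by simp [φ, γ]
  linarith [hanti (left_mem_Icc.2 zero_le_one) (right_mem_Icc.2 zero_le_one) zero_le_one]

lemma econj_eq_of_mem_csubdiff {f : E → EReal} {z₀ y : E} {F₀ : ℝ} (hz₀ : f z₀ = F₀)
    (hy : y ∈ csubdiff f z₀) : econj f y = ((⟪z₀, y⟫ - F₀ : ℝ) : EReal) := by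
  refine le_antisymm (iSup_le fun z => ?_) ?_
  · have hz := hy z
    rw [hz₀, ← EReal.coe_add] at hz
    calc ((⟪z, y⟫ : ℝ) : EReal) - f z ≤ ((⟪z, y⟫ : ℝ) : EReal) - ((F₀ + ⟪y, z - z₀⟫ : ℝ) : EReal) :=
          EReal.sub_le_sub le_rfl hz
      _ = ((⟪z₀, y⟫ - F₀ : ℝ) : EReal) := by
          rw [← EReal.coe_sub, inner_sub_right, real_inner_comm y z, real_inner_comm y z₀]
          ring_nf
  · have h := le_iSup (fun z => ((⟪z, y⟫ : ℝ) : EReal) - f z) z₀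
    rwa [hz₀, ← EReal.coe_sub] at h

lemma ERealConvex.convex_edom {f : E → EReal} (hbot : ∀ z, f z ≠ ⊥) (hconv : ERealConvex f) :
    Convex ℝ (edom f) := by
  intro x hx y hy a b ha hb hab htop
  have h := hconv x y a b ha hb hab
  rw [htop, ← EReal.coe_toReal hx (hbot x), ← EReal.coe_toReal hy (hbot y)] at h
  exact (EReal.coe_lt_top _).not_ge (by exact_mod_cast h)

lemma ERealConvex.convexOn_toReal {f : E → EReal} (hbot : ∀ z, f z ≠ ⊥)
    (hconv : ERealConvex f) : ConvexOn ℝ (edom f) (fun z => (f z).toReal) := by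
  refine ⟨hconv.convex_edom hbot, fun x hx y hy a b ha hb hab => ?_⟩
  have h := hconv x y a b ha hb hab
  rw [← EReal.coe_toReal hx (hbot x), ← EReal.coe_toReal hy (hbot y),
    ← EReal.coe_toReal (hconv.convex_edom hbot hx hy ha hb hab) (hbot _)] at h
  exact_mod_cast h

lemma ERealConvex.exists_norm_le_of_mem_csubdiff [FiniteDimensional ℝ E] {f : E → EReal}
    (hbot : ∀ z, f z ≠ ⊥) (hconv : ERealConvex f) {A : Set E} (hA : IsCompact A)
    (hAf : A ⊆ interior (edom f)) : ∃ Y, ∀ a ∈ A, ∀ y ∈ csubdiff f a, ‖y‖ ≤ Y := by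
  obtain ⟨r, hr, hAr⟩ := hA.exists_cthickening_subset_open isOpen_interior hAf
  have hcont : ContinuousOn (fun z => (f z).toReal) (interior (edom f)) :=
    ((hconv.convexOn_toReal hbot).subset interior_subset
      (hconv.convex_edom hbot).interior).continuousOn isOpen_interior
  obtain ⟨C, hC⟩ := hA.cthickening.exists_bound_of_continuousOn (hcont.mono hAr)
  have hfC : ∀ z ∈ cthickening r A, f z = ((f z).toReal : EReal) ∧ |(f z).toReal| ≤ C :=
    fun z hz => ⟨(EReal.coe_toReal (interior_subset (hAr hz)) (hbot z)).symm, hC z hz⟩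
  refine ⟨2 * C / r, fun a ha y hy => ?_⟩
  obtain ⟨hfa, hCa⟩ := hfC a (self_subset_cthickening A ha)
  rcases eq_or_ne y 0 with rfl | hy0
  · simpa using div_nonneg (by linarith [abs_nonneg (f a).toReal]) hr.le
  set z := a + (r / ‖y‖) • y
  have hyz : ⟪y, z - a⟫ = r * ‖y‖ := by
    rw [add_sub_cancel_left, real_inner_smul_right, real_inner_self_eq_norm_sq]
    field_simp
  have hz : z ∈ cthickening r A := mem_cthickening_of_dist_le z a r A ha (by
    rw [dist_eq_norm, add_sub_cancel_left, norm_smul, Real.norm_eq_abs,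
      abs_of_nonneg (by positivity), div_mul_cancel₀ _ (norm_ne_zero_iff.2 hy0)])
  obtain ⟨hfz, hCz⟩ := hfC z hz
  have hsub := hy z
  rw [hfa, hfz, hyz, ← EReal.coe_add, EReal.coe_le_coe_iff] at hsub
  rw [le_div_iff₀ hr]
  linarith [abs_le.1 hCa, abs_le.1 hCz]

lemma ERealConvex.tendsto_inner_csubdiff_sub [FiniteDimensional ℝ E] {f : E → EReal}
    (hbot : ∀ z, f z ≠ ⊥) (hconv : ERealConvex f) {A : Set E} (hA : IsCompact A)
    (hAf : A ⊆ interior (edom f)) {z y : ℕ → E} (hz : ∀ k, z k ∈ A)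
    (hy : ∀ k, y (k + 1) ∈ csubdiff f (z k))
    (hdz : Tendsto (fun k => z (k + 1) - z k) atTop (𝓝 0)) :
    Tendsto (fun k => ⟪y (k + 1), z (k + 1) - z k⟫) atTop (𝓝 0) := by
  obtain ⟨Y, hY⟩ := hconv.exists_norm_le_of_mem_csubdiff hbot hA hAf
  refine squeeze_zero_norm (fun k => (norm_inner_le_norm _ _).trans
    (mul_le_mul_of_nonneg_right (hY _ (hz k) _ (hy k)) (norm_nonneg _))) ?_
  simpa using (tendsto_norm_zero.comp hdz).const_mul Y

end ConvexAnalysis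

section FPSA

variable {E F : Type*} [NormedAddCommGroup E] [InnerProductSpace ℝ E]
  [NormedAddCommGroup F] [InnerProductSpace ℝ F]

lemma ERealConvex.prox_sufficient_decrease {g : E → EReal} (hgconv : ERealConvex g)
    (hgbot : ∀ z, g z ≠ ⊥) {S : Set E} (hS : Convex ℝ S) {δ : ℝ} (hδ : 0 < δ) {u d x x' : E}
    (hx : x ∈ S) (hx' : x' ∈ S) (hgx : g x ≠ ⊤) (hgx' : g x' ≠ ⊤)
    (hmin : ∀ w ∈ S, g x' + (((2 * δ)⁻¹ * ‖x' - u + δ • d‖ ^ 2 : ℝ) : EReal)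
      ≤ g w + (((2 * δ)⁻¹ * ‖w - u + δ • d‖ ^ 2 : ℝ) : EReal)) :
    (g x').toReal + (2 * δ)⁻¹ * ‖x' - u‖ ^ 2 + (2 * δ)⁻¹ * ‖x' - x‖ ^ 2 + ⟪d, x' - x⟫
      ≤ (g x).toReal + (2 * δ)⁻¹ * ‖x - u‖ ^ 2 := by
  have hshift : ∀ w, w - u + δ • d = w - (u - δ • d) := fun w => by abel
  simp only [hshift] at hmin
  have h := hgconv.toReal_add_sq_le_of_isMinOn hgbot hS hx' hx hgx' hgx (isMinOn_iff.2 hmin)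
  have hexpand : ∀ w, (2 * δ)⁻¹ * ‖w - (u - δ • d)‖ ^ 2
      = (2 * δ)⁻¹ * ‖w - u‖ ^ 2 + ⟪d, w - u⟫ + δ / 2 * ‖d‖ ^ 2 := fun w => by
    rw [← hshift, norm_add_sq_real, norm_smul, real_inner_smul_right, Real.norm_eq_abs,
      abs_of_pos hδ, real_inner_comm]
    field_simp
  have hinner : ⟪d, x' - u⟫ - ⟪d, x - u⟫ = ⟪d, x' - x⟫ := by
    rw [← inner_sub_right, sub_sub_sub_cancel_right]
  rw [hexpand, hexpand] at h
  linarith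

lemma inv_two_mul_sub_half_pos {δ L : ℝ} (hδ : 0 < δ) (hδL : δ < 1 / L) :
    0 < (2 * δ)⁻¹ - L / 2 := by
  have hδL' : δ * L < 1 := (lt_div_iff₀ (one_div_pos.1 (hδ.trans hδL))).1 hδL
  rw [show (2 * δ)⁻¹ - L / 2 = (1 - δ * L) / (2 * δ) by field_simp]
  exact div_pos (by linarith) (by linarith)

lemma fpsa_sufficient_decrease [FiniteDimensional ℝ E] [FiniteDimensional ℝ F] {S : Set E}
    (hS : Convex ℝ S) {g : E → EReal} (hgconv : ERealConvex g) (hgbot : ∀ z, g z ≠ ⊥)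
    {h : E → ℝ} {gh : E → E} {O : Set E} {L : ℝ} (hSO : S ⊆ O)
    (hgrad : ∀ z ∈ O, HasGradientAt h (gh z) z)
    (hlip : ∀ z ∈ O, ∀ w ∈ O, ‖gh z - gh w‖ ≤ L * ‖z - w‖)
    {K : E →ₗ[ℝ] F} {δ σ θ : ℝ} (hδ : 0 < δ) (hσ : σ ≠ 0) {x u x' u' : E} {y : F}
    (hx : x ∈ S) (hx' : x' ∈ S) (hgx : g x ≠ ⊤) (hgx' : g x' ≠ ⊤)
    (hmin : ∀ w ∈ S,
      g x' + (((2 * δ)⁻¹ * ‖x' - u + δ • gh x - (θ * δ) • (LinearMap.adjoint K) y‖ ^ 2 : ℝ) : EReal)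
        ≤ g w +
          (((2 * δ)⁻¹ * ‖w - u + δ • gh x - (θ * δ) • (LinearMap.adjoint K) y‖ ^ 2 : ℝ) : EReal))
    (hu' : u' = (1 - σ) • u + σ • x') :
    (g x').toReal + h x' + (2 * δ)⁻¹ * ‖x' - u'‖ ^ 2
        + ((2 * δ)⁻¹ - L / 2) * ‖x - x'‖ ^ 2 + (2 * δ)⁻¹ * (2 - σ) / σ * ‖u - u'‖ ^ 2
      ≤ (g x).toReal + h x + (2 * δ)⁻¹ * ‖x - u‖ ^ 2 + θ * ⟪y, K x' - K x⟫ := by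
  set d := gh x - θ • (LinearMap.adjoint K) y
  have hshift : ∀ w, w - u + δ • gh x - (θ * δ) • (LinearMap.adjoint K) y = w - u + δ • d :=
    fun w => by simp only [d]; module
  simp only [hshift] at hmin
  have hprox := hgconv.prox_sufficient_decrease hgbot hS hδ hx hx' hgx hgx' hmin
  have hdescent : h x' ≤ h x + ⟪gh x, x' - x⟫ + L / 2 * ‖x' - x‖ ^ 2 :=
    le_add_inner_add_of_lipschitz_gradient hgrad hlip ((hS.segment_subset hx hx').trans hSO)
  have hd : ⟪d, x' - x⟫ = ⟪gh x, x' - x⟫ - θ * ⟪y, K x' - K x⟫ := by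
    rw [inner_sub_left, real_inner_smul_left, LinearMap.adjoint_inner_left, map_sub]
  have hx'u' : ‖x' - u'‖ ^ 2 = (1 - σ) ^ 2 * ‖x' - u‖ ^ 2 := by
    rw [hu', show x' - ((1 - σ) • u + σ • x') = (1 - σ) • (x' - u) by module, norm_smul,
      mul_pow, Real.norm_eq_abs, sq_abs]
  have huu' : (2 * δ)⁻¹ * (2 - σ) / σ * ‖u - u'‖ ^ 2
      = (2 * δ)⁻¹ * (σ * (2 - σ)) * ‖x' - u‖ ^ 2 := by
    rw [hu', show u - ((1 - σ) • u + σ • x') = (-σ) • (x' - u) by module, norm_smul,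
      mul_pow, Real.norm_eq_abs, sq_abs]
    field_simp
  rw [hx'u', huu', norm_sub_rev x x']
  linarith [hprox, hdescent, hd]

end FPSA

lemma div_le_div_sub_div_of_add_le_mul {p₁ p₂ d₀ d₁ f₁ θ₁ s M : ℝ} (hd₀ : 0 < d₀)
    (hd₀f₁ : d₀ ≤ f₁) (hd₁ : 0 < d₁) (hd₁M : d₁ ≤ M) (hθ₁ : 0 ≤ θ₁) (hs : 0 ≤ s)
    (hθf₁ : θ₁ * f₁ = p₁) (hdesc : p₂ + s ≤ θ₁ * d₁) :
    p₂ / d₁ ≤ p₁ / d₀ - s / M := by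
  have hp₂ : p₂ / d₁ ≤ θ₁ - s / d₁ := by
    rw [div_le_iff₀ hd₁, sub_mul, div_mul_cancel₀ _ hd₁.ne']
    linarith
  have hsM : s / M ≤ s / d₁ := div_le_div_of_nonneg_left hs hd₁ hd₁M
  have hθ₁p₁ : θ₁ ≤ p₁ / d₀ := by
    rw [le_div_iff₀ hd₀, ← hθf₁]
    exact mul_le_mul_of_nonneg_left hd₀f₁ hθ₁
  linarith

lemma tendsto_zero_of_le_mul_sub_succ {θ s w : ℕ → ℝ} {M : ℝ} (hθ : ∀ k, 0 ≤ θ k)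
    (hs : ∀ k, 0 ≤ s k) (hw : ∀ k, 0 < w k ∧ w k ≤ M)
    (hle : ∀ k, s k ≤ w k * (θ k - θ (k + 1))) : Tendsto s atTop (𝓝 0) := by
  have hle' : ∀ k, s k ≤ M * (θ k - θ (k + 1)) := fun k => by
    have hθk : 0 ≤ θ k - θ (k + 1) := nonneg_of_mul_nonneg_right ((hs k).trans (hle k)) (hw k).1
    exact (hle k).trans (mul_le_mul_of_nonneg_right (hw k).2 hθk)
  refine (summable_of_sum_range_le (c := M * θ 0) hs fun n => ?_).tendsto_atTop_zero
  calc ∑ k ∈ Finset.range n, s k ≤ ∑ k ∈ Finset.range n, M * (θ k - θ (k + 1)) :=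
        Finset.sum_le_sum fun k _ => hle' k
    _ = M * (θ 0 - θ n) := by rw [← Finset.mul_sum, Finset.sum_range_sub']
    _ ≤ M * θ 0 := by nlinarith [hθ n, (hw 0).1.trans_le (hw 0).2]

lemma tendsto_zero_of_mul_norm_sq_le {E : Type*} [NormedAddCommGroup E] {v : ℕ → E}
    {s : ℕ → ℝ} {c : ℝ} (hc : 0 < c) (hle : ∀ k, c * ‖v k‖ ^ 2 ≤ s k) (hs : Tendsto s atTop (𝓝 0)) :
    Tendsto v atTop (𝓝 0) := by
  have hsq : Tendsto (fun k => ‖v k‖ ^ 2) atTop (𝓝 0) :=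
    squeeze_zero (fun k => sq_nonneg _) (fun k => (le_div_iff₀' hc).2 (hle k))
      (by simpa using hs.div_const c)
  rw [tendsto_zero_iff_norm_tendsto_zero]
  simpa using hsq.sqrt

lemma eventually_div_le_div_sub_div {F P θ D s : ℕ → ℝ} {m M : ℝ} (hm : 0 < m)
    (hF : ∀ k, m ≤ F k ∧ F k ≤ M) (hθ : ∀ k, 0 ≤ θ k) (hs : ∀ k, 0 ≤ s k)
    (hθF : ∀ k, θ k * F k = P k) (hdesc : ∀ k, P (k + 1) + s k ≤ θ k * D k)
    (hDF : ∀ k, D k ≤ F (k + 1)) (hDF_sub : Tendsto (fun k => D k - F k) atTop (𝓝 0)) :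
    ∀ᶠ k in atTop, P (k + 1 + 1) / D (k + 1) ≤ P (k + 1) / D k - s (k + 1) / M := by
  have hD : ∀ᶠ k in atTop, 0 < D k := by
    filter_upwards [hDF_sub.eventually (Ioi_mem_nhds (neg_lt_zero.2 hm))] with k hk
    linarith [(hF k).1]
  filter_upwards [hD, (tendsto_add_atTop_nat 1).eventually hD] with k hk hk₁
  exact div_le_div_sub_div_of_add_le_mul hk (hDF k) hk₁ ((hDF (k + 1)).trans (hF _).2)
    (hθ _) (hs _) (hθF _) (hdesc _)

section Merit

variable {n p : ℕ} {S : Set (EuclideanSpace ℝ (Fin n))} {g : EuclideanSpace ℝ (Fin n) → EReal}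
  {h : EuclideanSpace ℝ (Fin n) → ℝ} {δ : ℝ} {x u : EuclideanSpace ℝ (Fin n)}

lemma phiF_eq_coe (hx : x ∈ S) (hgx : g x ≠ ⊤) (hgbot : g x ≠ ⊥) :
    phiF S g h δ x u = (((g x).toReal + h x + (2 * δ)⁻¹ * ‖x - u‖ ^ 2 : ℝ) : EReal) := by
  rw [phiF, if_pos hx, add_zero, ← EReal.coe_toReal hgx hgbot]
  norm_cast

lemma varpiF_eq_coe_div {f : EuclideanSpace ℝ (Fin p) → EReal}
    {K : EuclideanSpace ℝ (Fin n) →ₗ[ℝ] EuclideanSpace ℝ (Fin p)} {y z : EuclideanSpace ℝ (Fin p)}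
    {P F₀ : ℝ} (hphi : phiF S g h δ x u = P) (hfz : f z = F₀) (hy : y ∈ csubdiff f z) :
    varpiF S g h f K δ x y u = ((P / (F₀ + ⟪y, K x - z⟫) : ℝ) : EReal) := by
  rw [varpiF, hphi, econj_eq_of_mem_csubdiff hfz hy, ← EReal.coe_sub, ← EReal.coe_div,
    inner_sub_right, real_inner_comm (K x), real_inner_comm z]
  ring_nf

end Merit

theorem stmt11_general {n p : ℕ}
    (S : Set (EuclideanSpace ℝ (Fin n)))
    (g : EuclideanSpace ℝ (Fin n) → EReal)
    (h : EuclideanSpace ℝ (Fin n) → ℝ)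
    (gh : EuclideanSpace ℝ (Fin n) → EuclideanSpace ℝ (Fin n))
    (f : EuclideanSpace ℝ (Fin p) → EReal)
    (K : EuclideanSpace ℝ (Fin n) →ₗ[ℝ] EuclideanSpace ℝ (Fin p))
    (L δ : ℝ)
    (hSconv : Convex ℝ S) (hScomp : IsCompact S)
    (hgP : ERealProper g) (hgconv : ERealConvex g)
    (hfP : ERealProper f) (hfconv : ERealConvex f)
    (hhC1 : ∃ O : Set (EuclideanSpace ℝ (Fin n)), IsOpen O ∧ S ⊆ O ∧
      (∀ z ∈ O, HasGradientAt h (gh z) z) ∧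
      (∀ z ∈ O, ∀ w ∈ O, ‖gh z - gh w‖ ≤ L * ‖z - w‖))
    (hKS : ∀ z ∈ S, K z ∈ interior (edom f))
    (hδ : 0 < δ) (hδL : δ < 1 / L)
    (σ : ℝ) (hσ : 0 < σ) (hσ2 : σ < 2)
    (x u : ℕ → EuclideanSpace ℝ (Fin n)) (y : ℕ → EuclideanSpace ℝ (Fin p)) (θ : ℕ → ℝ)
    (hxS : ∀ k, x k ∈ S ∧ g (x k) ≠ ⊤)
    (hy : ∀ k, y (k+1) ∈ csubdiff f (K (x k)))
    (hxmin : ∀ k, ∀ w ∈ S,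
      g (x (k+1)) + (((2*δ)⁻¹ * ‖x (k+1) - u k + δ • gh (x k)
          - (θ k * δ) • (LinearMap.adjoint K) (y (k+1))‖ ^ 2 : ℝ) : EReal)
        ≤ g w + (((2*δ)⁻¹ * ‖w - u k + δ • gh (x k)
          - (θ k * δ) • (LinearMap.adjoint K) (y (k+1))‖ ^ 2 : ℝ) : EReal))
    (hu : ∀ k, u (k+1) = (1 - σ) • u k + σ • x (k+1))
    (hθ : ∀ k, (θ k : EReal) = varthetaF S g h f K δ (x k) (u k))
    (hθnn : ∀ k, 0 ≤ θ k)
    (m M : ℝ) (hm : 0 < m)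
    (hmM : ∀ k, (m : EReal) ≤ f (K (x k)) ∧ f (K (x k)) ≤ (M : EReal))
    :
    ∃ c > (0:ℝ), ∃ N : ℕ, ∀ k ≥ N,
      varpiF S g h f K δ (x (k+1)) (y (k+1)) (u (k+1))
      ≤ varpiF S g h f K δ (x k) (y k) (u k)
        - ((c * ‖x k - x (k+1)‖ ^ 2 : ℝ) : EReal)
        - ((c * ‖u k - u (k+1)‖ ^ 2 : ℝ) : EReal) := by
  obtain ⟨O, -, hSO, hgrad, hlip⟩ := hhC1
  set α := (2 * δ)⁻¹ - L / 2
  set β := (2 * δ)⁻¹ * (2 - σ) / σ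
  have hα : 0 < α := inv_two_mul_sub_half_pos hδ hδL
  have hβ : 0 < β := div_pos (mul_pos (by positivity) (by linarith)) hσ
  set F : ℕ → ℝ := fun k => (f (K (x k))).toReal
  set P : ℕ → ℝ := fun k => (g (x k)).toReal + h (x k) + (2 * δ)⁻¹ * ‖x k - u k‖ ^ 2
  set D : ℕ → ℝ := fun k => F k + ⟪y (k + 1), K (x (k + 1)) - K (x k)⟫
  set s : ℕ → ℝ := fun k => α * ‖x k - x (k + 1)‖ ^ 2 + β * ‖u k - u (k + 1)‖ ^ 2
  have hs_nonneg : ∀ k, 0 ≤ s k := fun k => by positivity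
  have hfF : ∀ k, f (K (x k)) = F k := fun k =>
    (EReal.coe_toReal (ne_top_of_le_ne_top (EReal.coe_ne_top M) (hmM k).2) (hfP.1 _)).symm
  have hF : ∀ k, m ≤ F k ∧ F k ≤ M := fun k => by
    have := hmM k
    rw [hfF k] at this
    exact_mod_cast this
  have hphi : ∀ k, phiF S g h δ (x k) (u k) = P k := fun k =>
    phiF_eq_coe (hxS k).1 (hxS k).2 (hgP.1 _)
  have hθF : ∀ k, θ k * F k = P k := fun k => by
    have := hθ k
    rw [varthetaF, hphi, hfF, ← EReal.coe_div, EReal.coe_eq_coe_iff] at this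
    rw [this, div_mul_cancel₀ _ (hm.trans_le (hF k).1).ne']
  have hdesc : ∀ k, P (k + 1) + s k ≤ θ k * D k := fun k => by
    have := fpsa_sufficient_decrease hSconv hgconv hgP.1 hSO hgrad hlip hδ hσ.ne' (hxS k).1
      (hxS (k + 1)).1 (hxS k).2 (hxS (k + 1)).2 (hxmin k) (hu k)
    rw [mul_add, hθF k]
    simp only [P, s, α, β] at this ⊢
    linarith
  have hDF : ∀ k, D k ≤ F (k + 1) := fun k => by
    have := hy k (K (x (k + 1)))
    rwa [hfF, hfF, ← EReal.coe_add, EReal.coe_le_coe_iff] at this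
  have hs : Tendsto s atTop (𝓝 0) :=
    tendsto_zero_of_le_mul_sub_succ (w := fun k => F (k + 1)) hθnn hs_nonneg
      (fun k => ⟨hm.trans_le (hF _).1, (hF _).2⟩)
      (fun k => by nlinarith [hdesc k, hDF k, hθF (k + 1), hθnn k])
  have hdx : Tendsto (fun k => x (k + 1) - x k) atTop (𝓝 0) :=
    tendsto_zero_of_mul_norm_sq_le hα (fun k => by
      rw [norm_sub_rev]
      exact le_add_of_nonneg_right (by positivity)) hs
  have hDF_sub : Tendsto (fun k => D k - F k) atTop (𝓝 0) := by
    have hKc := K.continuous_of_finiteDimensional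
    simpa [D, map_sub] using hfconv.tendsto_inner_csubdiff_sub hfP.1 (hScomp.image hKc)
      (image_subset_iff.2 hKS) (fun k => mem_image_of_mem K (hxS k).1) hy
      (by simpa [Function.comp_def] using (hKc.tendsto 0).comp hdx)
  obtain ⟨N, hN⟩ := (eventually_div_le_div_sub_div hm hF hθnn hs_nonneg hθF hdesc hDF
    hDF_sub).exists_forall_of_atTop
  have hM : 0 < M := hm.trans_le ((hF 0).1.trans (hF 0).2)
  refine ⟨min α β / M, div_pos (lt_min hα hβ) hM, N + 1, fun k hk => ?_⟩
  obtain ⟨a, rfl⟩ : ∃ a, k = a + 1 := ⟨k - 1, by omega⟩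
  rw [varpiF_eq_coe_div (hphi _) (hfF _) (hy _), varpiF_eq_coe_div (hphi _) (hfF _) (hy _)]
  have hmin_s : min α β / M * ‖x (a + 1) - x (a + 1 + 1)‖ ^ 2
      + min α β / M * ‖u (a + 1) - u (a + 1 + 1)‖ ^ 2 ≤ s (a + 1) / M := by
    rw [div_mul_eq_mul_div, div_mul_eq_mul_div, ← add_div]
    gcongr
    exact add_le_add (by gcongr; exact min_le_left α β) (by gcongr; exact min_le_right α β)
  norm_cast
  linarith [hN a (by omega)]

theorem stmt11 {n p : ℕ}
    (S : Set (EuclideanSpace ℝ (Fin n)))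
    (g : EuclideanSpace ℝ (Fin n) → EReal)
    (h : EuclideanSpace ℝ (Fin n) → ℝ)
    (gh : EuclideanSpace ℝ (Fin n) → EuclideanSpace ℝ (Fin n))
    (f : EuclideanSpace ℝ (Fin p) → EReal)
    (K : EuclideanSpace ℝ (Fin n) →ₗ[ℝ] EuclideanSpace ℝ (Fin p))
    (L δ : ℝ)
    (hS : S.Nonempty) (hSconv : Convex ℝ S) (hScomp : IsCompact S)
    (hgP : ERealProper g) (hgconv : ERealConvex g) (hglsc : LowerSemicontinuous g)
    (hfP : ERealProper f) (hfconv : ERealConvex f) (hflsc : LowerSemicontinuous f)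
    (hL : 0 < L)
    (hhC1 : ∃ O : Set (EuclideanSpace ℝ (Fin n)), IsOpen O ∧ S ⊆ O ∧
      (∀ z ∈ O, HasGradientAt h (gh z) z) ∧
      (∀ z ∈ O, ∀ w ∈ O, ‖gh z - gh w‖ ≤ L * ‖z - w‖))
    (hKS : ∀ z ∈ S, K z ∈ interior (edom f))
    (hfpos : ∀ z ∈ S, (0 : EReal) < f (K z))
    (hghnn : ∀ z ∈ S, (0 : EReal) ≤ g z + ((h z : ℝ) : EReal))
    (hSg : ∃ z ∈ S, g z ≠ ⊤)
    (hδ : 0 < δ) (hδL : δ < 1 / L)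
    (σ : ℝ) (hσ : 0 < σ) (hσ2 : σ < 2)
    (x u : ℕ → EuclideanSpace ℝ (Fin n)) (y : ℕ → EuclideanSpace ℝ (Fin p)) (θ : ℕ → ℝ)
    (hxS : ∀ k, x k ∈ S ∧ g (x k) ≠ ⊤)
    (hy : ∀ k, y (k+1) ∈ csubdiff f (K (x k)))
    (hxmin : ∀ k, ∀ w ∈ S,
      g (x (k+1)) + (((2*δ)⁻¹ * ‖x (k+1) - u k + δ • gh (x k)
          - (θ k * δ) • (LinearMap.adjoint K) (y (k+1))‖ ^ 2 : ℝ) : EReal)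
        ≤ g w + (((2*δ)⁻¹ * ‖w - u k + δ • gh (x k)
          - (θ k * δ) • (LinearMap.adjoint K) (y (k+1))‖ ^ 2 : ℝ) : EReal))
    (hu : ∀ k, u (k+1) = (1 - σ) • u k + σ • x (k+1))
    (hθ : ∀ k, (θ k : EReal) = varthetaF S g h f K δ (x k) (u k))
    (hθnn : ∀ k, 0 ≤ θ k)
    (m M : ℝ) (hm : 0 < m)
    (hmM : ∀ k, (m : EReal) ≤ f (K (x k)) ∧ f (K (x k)) ≤ (M : EReal))
    :
    ∃ c > (0:ℝ), ∃ N : ℕ, ∀ k ≥ N,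
      varpiF S g h f K δ (x (k+1)) (y (k+1)) (u (k+1))
      ≤ varpiF S g h f K δ (x k) (y k) (u k)
        - ((c * ‖x k - x (k+1)‖ ^ 2 : ℝ) : EReal)
        - ((c * ‖u k - u (k+1)‖ ^ 2 : ℝ) : EReal) :=
  stmt11_general S g h gh f K L δ hSconv hScomp hgP hgconv hfP hfconv hhC1 hKS hδ hδL σ hσ hσ2 x u y
    θ hxS hy hxmin hu hθ hθnn m M hm hmM
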